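/- For all integers F ≥ 1 and M ≥ F + 1, there exists a matrix G ∈ ℝ^{M×F} such that GᵀG = M·I_F, Gᵀ1_M = 0_F (where 1_M is the all-ones vector in ℝ^M), and G has at most F + 1 nonzero rows. -/

import Mathlib

/-! The columns of an orthonormal basis of the orthogonal complement of `1` in `ℝ^(F+1)` form a
matrix `U` with `UᵀU = I` and `Uᵀ1 = 0`. Padding `√M • U` with `M - F - 1` zero rows changes
neither `GᵀG` nor `Gᵀ1`, because the zero rows contribute nothing to either sum. -/

open Matrix

theorem exists_orthonormal_fin_orthogonal {𝕜 E : Type*} [RCLike 𝕜] [NormedAddCommGroup E]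
    [InnerProductSpace 𝕜 E] [FiniteDimensional 𝕜 E] {n : ℕ} (hn : Module.finrank 𝕜 E = n + 1)
    {v : E} (hv : v ≠ 0) :
    ∃ u : Fin n → E, Orthonormal 𝕜 u ∧ ∀ j, inner 𝕜 v (u j) = 0 := by
  have : Fact (Module.finrank 𝕜 E = n + 1) := ⟨hn⟩
  let b := (stdOrthonormalBasis 𝕜 (𝕜 ∙ v)ᗮ).reindex
    (finCongr (Submodule.finrank_orthogonal_span_singleton (n := n) hv))
  exact ⟨fun j => b j, b.orthonormal.comp_linearIsometry (Submodule.subtypeₗᵢ _),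
    fun j => Submodule.mem_orthogonal_singleton_iff_inner_right.mp (b j).2⟩

theorem exists_transpose_mul_self_eq_one_mulVec_one_eq_zero (n : ℕ) :
    ∃ U : Matrix (Fin (n + 1)) (Fin n) ℝ, Uᵀ * U = 1 ∧ Uᵀ *ᵥ (fun _ => 1) = 0 := by
  obtain ⟨u, hu, hu1⟩ := exists_orthonormal_fin_orthogonal (𝕜 := ℝ)
    (E := EuclideanSpace ℝ (Fin (n + 1))) finrank_euclideanSpace_fin
    (v := WithLp.toLp 2 (fun _ => 1)) (by simp [funext_iff])
  refine ⟨Matrix.of fun i j => u j i, ?_, ?_⟩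
  · ext j k
    have hjk := orthonormal_iff_ite.mp hu j k
    rw [EuclideanSpace.inner_eq_star_dotProduct] at hjk
    simpa [mul_apply, dotProduct, one_apply, mul_comm] using hjk
  · ext j
    have hj := hu1 j
    rw [EuclideanSpace.inner_eq_star_dotProduct] at hj
    simpa [mulVec, dotProduct] using hj

section Padding

/- For an injective `e : ι → ι'`, `(1 : Matrix ι' ι' R).submatrix id e * U` places row `i` of `U`
at row `e i` and fills the remaining rows with zeros. -/

variable {R ι ι' κ : Type*} [CommSemiring R] [DecidableEq ι'] {e : ι → ι'}

theorem transpose_mul_submatrix_one [DecidableEq ι] [Fintype ι'] (he : Function.Injective e) :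
    ((1 : Matrix ι' ι' R).submatrix id e)ᵀ * (1 : Matrix ι' ι' R).submatrix id e = 1 := by
  rw [transpose_submatrix, transpose_one, ← submatrix_mul _ _ _ _ _ Function.bijective_id, one_mul,
    submatrix_one _ he]

theorem transpose_submatrix_one_mulVec_one [Fintype ι'] (e : ι → ι') :
    ((1 : Matrix ι' ι' R).submatrix id e)ᵀ *ᵥ (fun _ => 1) = fun _ => 1 := by
  ext i
  simp [mulVec, dotProduct, one_apply]

theorem transpose_mul_self_submatrix_one_mul [DecidableEq ι] [Fintype ι] [Fintype ι']
    (he : Function.Injective e) (U : Matrix ι κ R) :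
    ((1 : Matrix ι' ι' R).submatrix id e * U)ᵀ * ((1 : Matrix ι' ι' R).submatrix id e * U) =
      Uᵀ * U := by
  rw [transpose_mul, Matrix.mul_assoc, ← Matrix.mul_assoc _ _ U, transpose_mul_submatrix_one he,
    Matrix.one_mul]

theorem transpose_submatrix_one_mul_mulVec_one [Fintype ι] [Fintype ι'] (e : ι → ι')
    (U : Matrix ι κ R) :
    ((1 : Matrix ι' ι' R).submatrix id e * U)ᵀ *ᵥ (fun _ => 1) = Uᵀ *ᵥ (fun _ => 1) := by
  rw [transpose_mul, ← mulVec_mulVec, transpose_submatrix_one_mulVec_one]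

theorem submatrix_one_mul_apply_of_notMem_range [Fintype ι] (U : Matrix ι κ R) {m : ι'}
    (hm : m ∉ Set.range e) (j : κ) : ((1 : Matrix ι' ι' R).submatrix id e * U) m j = 0 :=
  Finset.sum_eq_zero fun i _ => by
    show (1 : Matrix ι' ι' R) m (e i) * U i j = 0
    rw [one_apply_ne fun h => hm ⟨i, h.symm⟩, zero_mul]

end Padding

theorem stmt7_general (F M : ℕ) (hM : F + 1 ≤ M) :
    ∃ G : Matrix (Fin M) (Fin F) ℝ,
      Gᵀ * G = (M : ℝ) • (1 : Matrix (Fin F) (Fin F) ℝ) ∧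
      Gᵀ.mulVec (fun _ => (1 : ℝ)) = 0 ∧
      ∃ S : Finset (Fin M), S.card ≤ F + 1 ∧ ∀ m ∉ S, ∀ j, G m j = 0 := by
  obtain ⟨U, hUU, hU1⟩ := exists_transpose_mul_self_eq_one_mulVec_one_eq_zero F
  let e := Fin.castLEEmb hM
  refine ⟨√(M : ℝ) • ((1 : Matrix (Fin M) (Fin M) ℝ).submatrix id e * U), ?_, ?_,
    Finset.univ.map e, by simp, fun m hm j => ?_⟩
  · rw [transpose_smul, Matrix.smul_mul, Matrix.mul_smul, smul_smul,
      transpose_mul_self_submatrix_one_mul e.injective, hUU, Real.mul_self_sqrt M.cast_nonneg]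
  · rw [transpose_smul, smul_mulVec, transpose_submatrix_one_mul_mulVec_one, hU1, smul_zero]
  · rw [Matrix.smul_apply, submatrix_one_mul_apply_of_notMem_range U (by simpa using hm), smul_zero]

/-- the finite-sample MAX-VAR DGCCA constraints admit trivial solutions:
there is `G ∈ ℝ^{M×F}` with `GᵀG = M·I`, `Gᵀ1 = 0`, and at most `F + 1` nonzero
rows. -/
theorem stmt7 (F M : ℕ) (hF : 1 ≤ F) (hM : F + 1 ≤ M) :
    ∃ G : Matrix (Fin M) (Fin F) ℝ,
      Gᵀ * G = (M : ℝ) • (1 : Matrix (Fin F) (Fin F) ℝ) ∧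
      Gᵀ.mulVec (fun _ => (1 : ℝ)) = 0 ∧
      ∃ S : Finset (Fin M), S.card ≤ F + 1 ∧ ∀ m ∉ S, ∀ j, G m j = 0 :=
  stmt7_general F M hM
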